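/- Let a ≥ 0 and λ₀ > 0. There exists C' > 0 such that for all λ ≥ λ₀ and all y ∈ H⁴(-1,0) with y(-1) = y(0) = y'(0) = 0, one has ∑_{k=0}^{4} λ^k ‖∂_x^{4-k} y‖²_{L²} ≤ C' ( ‖y⁽⁴⁾ + (a-λ) y''‖²_{L²} + ‖y''' + (a-λ) y'‖²_{L²} + λ⁴ ‖y‖²_{L²} ). -/

import Mathlib

/-!
Ehrling-type interpolation. On an interval of length `L`, each outer third contains a point where
`v ^ 2` is at most its mean, so the mean value theorem gives a point `ζ` with
`L ^ 3 * v' ζ ^ 2 ≤ 108 ‖v‖²`. Integrating `(v' ^ 2)' = 2 v' v''` from `ζ` and absorbing the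
cross term by Young's inequality yields `L ^ 2 ‖v'‖² ≤ 216 ‖v‖² + 4 L ^ 4 ‖v''‖²`. Cutting
`[a, b]` into pieces of length about `μ ^ (-1/2)` turns this into
`μ ‖v'‖² ≤ 864 (μ ^ 2 ‖v‖² + ‖v''‖²)` whenever `μ (b - a) ^ 2 ≥ 1`. Applied to `y, y', y''` at
the scales `t μ`, these inequalities bound every `μ ^ k ‖y^(4-k)‖²` by
`‖y⁗‖² + μ ^ 4 ‖y‖²`. Finally `‖y⁗‖² ≤ 2 ‖y⁗ + c y''‖² + 2 c ^ 2 ‖y''‖²`, and for `μ = λ / s`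
with `s` small the last term is absorbed into the left-hand side.
-/

open MeasureTheory Finset

theorem exists_mem_Icc_mul_le_integral {f : ℝ → ℝ} (hf : Continuous f) {a b : ℝ}
    (hab : a ≤ b) : ∃ ξ ∈ Set.Icc a b, (b - a) * f ξ ≤ ∫ x in a..b, f x := by
  obtain ⟨ξ, hξ, hmin⟩ :=
    isCompact_Icc.exists_isMinOn (Set.nonempty_Icc.2 hab) hf.continuousOn
  refine ⟨ξ, hξ, ?_⟩
  calc (b - a) * f ξ = ∫ _ in a..b, f ξ := by simp
    _ ≤ ∫ x in a..b, f x := intervalIntegral.integral_mono_on hab intervalIntegrable_const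
      (hf.intervalIntegrable a b) fun x hx => hmin hx

theorem sub_le_integral_abs_of_hasDerivAt {g g' : ℝ → ℝ} (hg : ∀ t, HasDerivAt g (g' t) t)
    (hg' : Continuous g') {a b x z : ℝ} (hx : x ∈ Set.Icc a b) (hz : z ∈ Set.Icc a b) :
    g x - g z ≤ ∫ t in a..b, |g' t| := by
  have hab : a ≤ b := hx.1.trans hx.2
  calc g x - g z = ∫ t in z..x, g' t := (intervalIntegral.integral_eq_sub_of_hasDerivAt
        (fun t _ => hg t) (hg'.intervalIntegrable z x)).symm
    _ ≤ |(∫ t in z..x, |g' t|)| := (le_abs_self _).trans <| by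
        simpa only [Real.norm_eq_abs] using
          intervalIntegral.norm_integral_le_abs_integral_norm (f := g')
    _ ≤ |(∫ t in a..b, |g' t|)| := by
        refine intervalIntegral.abs_integral_mono_interval ?_
          (Filter.Eventually.of_forall fun t => abs_nonneg _) (hg'.abs.intervalIntegrable a b)
        rw [Set.uIoc_of_le hab]
        exact Set.Ioc_subset_Ioc (le_inf hz.1 hx.1) (sup_le hz.2 hx.2)
    _ = ∫ t in a..b, |g' t| :=
        abs_of_nonneg (intervalIntegral.integral_nonneg hab fun t _ => abs_nonneg _)

theorem integral_sq_le_two_mul_integral_sq_add {f g : ℝ → ℝ} (hf : Continuous f)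
    (hg : Continuous g) {a b : ℝ} (hab : a ≤ b) :
    ∫ x in a..b, f x ^ 2 ≤ 2 * (∫ x in a..b, (f x + g x) ^ 2) + 2 * ∫ x in a..b, g x ^ 2 := by
  calc ∫ x in a..b, f x ^ 2 ≤ ∫ x in a..b, (2 * (f x + g x) ^ 2 + 2 * g x ^ 2) :=
        intervalIntegral.integral_mono_on hab (Continuous.intervalIntegrable (by fun_prop) a b)
          (Continuous.intervalIntegrable (by fun_prop) a b)
          fun x _ => by nlinarith [sq_nonneg (f x + 2 * g x)]
    _ = _ := by
        rw [intervalIntegral.integral_add (Continuous.intervalIntegrable (by fun_prop) a b)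
          (Continuous.intervalIntegrable (by fun_prop) a b), intervalIntegral.integral_const_mul,
          intervalIntegral.integral_const_mul]

section Interpolation

variable {v v' v'' : ℝ → ℝ} {a b : ℝ}

theorem exists_mem_Icc_cube_mul_sq_deriv_le (hv : ∀ x, HasDerivAt v (v' x) x) (hab : a < b) :
    ∃ ζ ∈ Set.Icc a b, (b - a) ^ 3 * v' ζ ^ 2 ≤ 108 * ∫ x in a..b, v x ^ 2 := by
  have hcont : Continuous v := continuous_iff_continuousAt.2 fun x => (hv x).continuousAt
  set L := b - a
  have hL : 0 < L := sub_pos.2 hab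
  have hsub : ∀ c d, a ≤ c → c ≤ d → d ≤ b →
      ∫ x in c..d, v x ^ 2 ≤ ∫ x in a..b, v x ^ 2 := fun c d hac hcd hdb =>
    intervalIntegral.integral_mono_interval hac hcd hdb
      (Filter.Eventually.of_forall fun x => sq_nonneg _) ((hcont.pow 2).intervalIntegrable a b)
  obtain ⟨ξ, hξ, hξQ⟩ := exists_mem_Icc_mul_le_integral (f := fun x => v x ^ 2) (hcont.pow 2)
    (by linarith : a ≤ a + L / 3)
  obtain ⟨η, hη, hηQ⟩ := exists_mem_Icc_mul_le_integral (f := fun x => v x ^ 2) (hcont.pow 2)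
    (by linarith : b - L / 3 ≤ b)
  replace hξQ := hξQ.trans (hsub _ _ le_rfl (by linarith) (by linarith))
  replace hηQ := hηQ.trans (hsub _ _ (by linarith) (by linarith) le_rfl)
  simp only [add_sub_cancel_left, sub_sub_cancel] at hξQ hηQ
  have hgap : L / 3 ≤ η - ξ := by linarith [hξ.2, hη.1]
  obtain ⟨ζ, hζ, hslope⟩ :=
    exists_hasDerivAt_eq_slope v v' (by linarith : ξ < η) hcont.continuousOn fun x _ => hv x
  refine ⟨ζ, ⟨by linarith [hζ.1, hξ.1], by linarith [hζ.2, hη.2]⟩, ?_⟩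
  have hsq : v' ζ ^ 2 * (η - ξ) ^ 2 = (v η - v ξ) ^ 2 := by
    rw [hslope, div_pow, div_mul_cancel₀ _ (pow_ne_zero 2 (by linarith))]
  have hv'ζ : v' ζ ^ 2 * (L / 3) ^ 2 ≤ 2 * v η ^ 2 + 2 * v ξ ^ 2 := by
    nlinarith [mul_le_mul_of_nonneg_left (pow_le_pow_left₀ (by positivity) hgap 2)
      (sq_nonneg (v' ζ)), sq_nonneg (v η + v ξ)]
  nlinarith [mul_le_mul_of_nonneg_left hv'ζ hL.le]

theorem integral_sq_le_of_mem_Icc (hv : ∀ x, HasDerivAt v (v' x) x) (hv' : Continuous v')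
    {ζ : ℝ} (hζ : ζ ∈ Set.Icc a b) :
    ∫ x in a..b, v x ^ 2 ≤ 2 * (b - a) * v ζ ^ 2 + 4 * (b - a) ^ 2 * ∫ x in a..b, v' x ^ 2 := by
  have hab : a ≤ b := hζ.1.trans hζ.2
  have hcont : Continuous v := continuous_iff_continuousAt.2 fun x => (hv x).continuousAt
  set L := b - a
  set P := ∫ x in a..b, v x ^ 2
  set S := ∫ x in a..b, v' x ^ 2
  set E := ∫ t in a..b, |2 * v t * v' t|
  have hdsq : ∀ t, HasDerivAt (fun x => v x ^ 2) (2 * v t * v' t) t := fun t => by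
    simpa using (hv t).fun_pow 2
  have hpoint : ∀ x ∈ Set.Icc a b, v x ^ 2 ≤ v ζ ^ 2 + E := fun x hx => by
    linarith [sub_le_integral_abs_of_hasDerivAt hdsq (by fun_prop) hx hζ]
  have hP : P ≤ L * (v ζ ^ 2 + E) :=
    calc P ≤ ∫ _ in a..b, (v ζ ^ 2 + E) := intervalIntegral.integral_mono_on hab
          ((hcont.pow 2).intervalIntegrable a b) intervalIntegrable_const hpoint
      _ = L * (v ζ ^ 2 + E) := by rw [intervalIntegral.integral_const, smul_eq_mul]
  -- Young's inequality `2 L |2 p q| ≤ p ^ 2 + 4 L ^ 2 q ^ 2` lets `P` absorb the cross term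
  have hE : 2 * L * E ≤ P + 4 * L ^ 2 * S := by
    calc 2 * L * E = ∫ t in a..b, 2 * L * |2 * v t * v' t| :=
          (intervalIntegral.integral_const_mul _ _).symm
      _ ≤ ∫ t in a..b, (v t ^ 2 + 4 * L ^ 2 * v' t ^ 2) := by
          refine intervalIntegral.integral_mono_on hab
            (Continuous.intervalIntegrable (by fun_prop) a b)
            (Continuous.intervalIntegrable (by fun_prop) a b) fun t _ => ?_
          rcases abs_cases (2 * v t * v' t) with ⟨h, -⟩ | ⟨h, -⟩ <;> rw [h] <;>
            nlinarith [sq_nonneg (v t - 2 * L * v' t), sq_nonneg (v t + 2 * L * v' t)]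
      _ = P + 4 * L ^ 2 * S := by
          rw [intervalIntegral.integral_add (Continuous.intervalIntegrable (by fun_prop) a b)
            (Continuous.intervalIntegrable (by fun_prop) a b), intervalIntegral.integral_const_mul]
  nlinarith

variable (hv : ∀ x, HasDerivAt v (v' x) x) (hv' : ∀ x, HasDerivAt v' (v'' x) x)
  (hv'' : Continuous v'')
include hv hv' hv''

theorem sq_mul_integral_deriv_sq_le (hab : a < b) :
    (b - a) ^ 2 * ∫ x in a..b, v' x ^ 2 ≤
      216 * (∫ x in a..b, v x ^ 2) + 4 * (b - a) ^ 4 * ∫ x in a..b, v'' x ^ 2 := by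
  obtain ⟨ζ, hζ, hslope⟩ := exists_mem_Icc_cube_mul_sq_deriv_le hv hab
  calc (b - a) ^ 2 * ∫ x in a..b, v' x ^ 2
      ≤ (b - a) ^ 2 * (2 * (b - a) * v' ζ ^ 2 + 4 * (b - a) ^ 2 * ∫ x in a..b, v'' x ^ 2) :=
        mul_le_mul_of_nonneg_left (integral_sq_le_of_mem_Icc hv' hv'' hζ) (sq_nonneg _)
    _ = 2 * ((b - a) ^ 3 * v' ζ ^ 2) + 4 * (b - a) ^ 4 * ∫ x in a..b, v'' x ^ 2 := by ring
    _ ≤ _ := by linarith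

theorem div_sq_mul_integral_deriv_sq_le {n : ℕ} (hn : 0 < n) (hab : a < b) :
    ((b - a) / n) ^ 2 * ∫ x in a..b, v' x ^ 2 ≤
      216 * (∫ x in a..b, v x ^ 2) + 4 * ((b - a) / n) ^ 4 * ∫ x in a..b, v'' x ^ 2 := by
  have hcont : Continuous v := continuous_iff_continuousAt.2 fun x => (hv x).continuousAt
  have hcont' : Continuous v' := continuous_iff_continuousAt.2 fun x => (hv' x).continuousAt
  set h := (b - a) / n
  have hh : 0 < h := div_pos (sub_pos.2 hab) (Nat.cast_pos.2 hn)
  set A : ℕ → ℝ := fun k => a + k * h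
  have hstep : ∀ k, A (k + 1) - A k = h := fun k => by simp only [A]; push_cast; ring
  have hA0 : A 0 = a := by simp [A]
  have hAn : A n = b := by simp only [A, h]; field_simp; ring
  have hsplit : ∀ f : ℝ → ℝ, Continuous f →
      ∑ k ∈ range n, ∫ x in A k..A (k + 1), f x = ∫ x in a..b, f x := fun f hf => by
    rw [intervalIntegral.sum_integral_adjacent_intervals fun k _ => hf.intervalIntegrable _ _,
      hA0, hAn]
  have hpieces : ∀ k ∈ range n, h ^ 2 * ∫ x in A k..A (k + 1), v' x ^ 2 ≤
      216 * (∫ x in A k..A (k + 1), v x ^ 2) +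
        4 * h ^ 4 * ∫ x in A k..A (k + 1), v'' x ^ 2 := fun k _ => by
    simpa only [hstep k] using sq_mul_integral_deriv_sq_le hv hv' hv''
      (a := A k) (b := A (k + 1)) (by linarith [hstep k])
  have hsum := sum_le_sum hpieces
  rwa [← mul_sum, sum_add_distrib, ← mul_sum, ← mul_sum,
    hsplit (fun x => v' x ^ 2) (hcont'.pow 2), hsplit (fun x => v x ^ 2) (hcont.pow 2),
    hsplit (fun x => v'' x ^ 2) (hv''.pow 2)] at hsum

theorem mul_integral_deriv_sq_le {μ : ℝ} (hab : a < b) (hμ : 1 ≤ μ * (b - a) ^ 2) :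
    μ * ∫ x in a..b, v' x ^ 2 ≤
      864 * (μ ^ 2 * (∫ x in a..b, v x ^ 2) + ∫ x in a..b, v'' x ^ 2) := by
  have hμ0 : 0 < μ := pos_of_mul_pos_left (one_pos.trans_le hμ) (sq_nonneg _)
  set r := (b - a) * √μ
  have hr : r ^ 2 = μ * (b - a) ^ 2 := by rw [mul_pow, Real.sq_sqrt hμ0.le, mul_comm]
  have hr1 : 1 ≤ r := by nlinarith [show 0 ≤ r by positivity]
  set n := ⌈r⌉₊
  have hrn : r ≤ n := Nat.le_ceil r
  have hnr : (n : ℝ) ≤ 2 * r := by linarith [Nat.ceil_lt_add_one (by linarith : 0 ≤ r)]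
  have hn : 0 < n := Nat.ceil_pos.2 (by linarith)
  have hn' : (0 : ℝ) < n := Nat.cast_pos.2 hn
  set c := μ * ((b - a) / n) ^ 2
  have hc : c * n ^ 2 = r ^ 2 := by rw [hr]; simp only [c]; field_simp
  have hc1 : c ≤ 1 := by nlinarith [pow_le_pow_left₀ (by linarith) hrn 2]
  have hc4 : 1 ≤ 4 * c := by
    refine le_of_mul_le_mul_right ?_ (pow_pos hn' 2)
    nlinarith [pow_le_pow_left₀ (by positivity) hnr 2]
  have hP : 0 ≤ ∫ x in a..b, v' x ^ 2 :=
    intervalIntegral.integral_nonneg hab.le fun _ _ => sq_nonneg _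
  have hS : 0 ≤ ∫ x in a..b, v'' x ^ 2 :=
    intervalIntegral.integral_nonneg hab.le fun _ _ => sq_nonneg _
  calc μ * ∫ x in a..b, v' x ^ 2 ≤ (4 * c) * (μ * ∫ x in a..b, v' x ^ 2) :=
        le_mul_of_one_le_left (by positivity) hc4
    _ = 4 * μ ^ 2 * (((b - a) / n) ^ 2 * ∫ x in a..b, v' x ^ 2) := by ring
    _ ≤ 4 * μ ^ 2 * (216 * (∫ x in a..b, v x ^ 2) +
          4 * ((b - a) / n) ^ 4 * ∫ x in a..b, v'' x ^ 2) :=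
        mul_le_mul_of_nonneg_left (div_sq_mul_integral_deriv_sq_le hv hv' hv'' hn hab)
          (by positivity)
    _ = 864 * μ ^ 2 * (∫ x in a..b, v x ^ 2) + 16 * c ^ 2 * ∫ x in a..b, v'' x ^ 2 := by ring
    _ ≤ 864 * (μ ^ 2 * (∫ x in a..b, v x ^ 2) + ∫ x in a..b, v'' x ^ 2) := by
        nlinarith [mul_le_mul_of_nonneg_right (pow_le_one₀ (by linarith) hc1 : c ^ 2 ≤ 1) hS]

end Interpolation

theorem sum_range_five_le_of_interpolation {X : ℕ → ℝ} {K : ℝ} (hK : 1 ≤ K)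
    (hX : ∀ m, 0 ≤ X m)
    (h : ∀ m, 0 < m → m < 4 → ∀ t : ℝ, 1 ≤ t →
      t * X m ≤ K * (t ^ 2 * X (m + 1) + X (m - 1))) :
    ∑ m ∈ range 5, X m ≤ 512 * K ^ 9 * (X 0 + X 4) := by
  have hK0 : 0 ≤ K := zero_le_one.trans hK
  have h1 := h 1 (by norm_num) (by norm_num) 1 le_rfl
  have h3 := h 3 (by norm_num) (by norm_num) 1 le_rfl
  have h2 := h 2 (by norm_num) (by norm_num) (4 * K ^ 2) (by nlinarith)
  have h3' := h 3 (by norm_num) (by norm_num) (16 * K ^ 4)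
    (by nlinarith [pow_le_pow_left₀ zero_le_one hK 4])
  norm_num at h1 h2 h3 h3'
  -- with `t` large in the middle inequality, the `X 1` and `X 3` contributions are absorbable
  have hX2 : X 2 ≤ 128 * K ^ 8 * X 4 + X 0 / 2 := by
    have : K ^ 2 * (2 * X 2) ≤ K ^ 2 * (256 * K ^ 8 * X 4 + X 0) := by
      nlinarith [mul_le_mul_of_nonneg_left h1 hK0, mul_le_mul_of_nonneg_left h3' hK0]
    nlinarith [le_of_mul_le_mul_left this (by positivity)]
  have hK9 : ∀ j ≤ 9, K ^ j ≤ K ^ 9 := fun j hj => pow_le_pow_right₀ hK hj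
  simp only [sum_range_succ, sum_range_zero]
  nlinarith [mul_le_mul_of_nonneg_left hX2 hK0, hK9 0 (by norm_num), hK9 1 (by norm_num),
    hK9 8 (by norm_num), hX 0, hX 4]

theorem ContDiff.hasDerivAt_iteratedDeriv {𝕜 F : Type*} [NontriviallyNormedField 𝕜]
    [NormedAddCommGroup F] [NormedSpace 𝕜 F] {f : 𝕜 → F} {n j : ℕ} (hf : ContDiff 𝕜 n f)
    (hj : j < n) (x : 𝕜) : HasDerivAt (iteratedDeriv j f) (iteratedDeriv (j + 1) f x) x := by
  rw [iteratedDeriv_succ]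
  exact (hf.differentiable_iteratedDeriv j (by exact_mod_cast hj)).differentiableAt.hasDerivAt

theorem mul_integral_sq_iteratedDeriv_succ_le {y : ℝ → ℝ} {n j : ℕ} (hy : ContDiff ℝ n y)
    (hj : j + 2 ≤ n) {a b μ : ℝ} (hab : a < b) (hμ : 1 ≤ μ * (b - a) ^ 2) :
    μ * ∫ x in a..b, iteratedDeriv (j + 1) y x ^ 2 ≤
      864 * (μ ^ 2 * (∫ x in a..b, iteratedDeriv j y x ^ 2) +
        ∫ x in a..b, iteratedDeriv (j + 2) y x ^ 2) :=
  mul_integral_deriv_sq_le (hy.hasDerivAt_iteratedDeriv (by omega))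
    (hy.hasDerivAt_iteratedDeriv (by omega)) (hy.continuous_iteratedDeriv _ (by exact_mod_cast hj))
    hab hμ

section FourthOrder

variable {y : ℝ → ℝ} (hy : ContDiff ℝ 4 y)
include hy

theorem sum_pow_mul_integral_sq_iteratedDeriv_le {a b μ : ℝ} (hab : a < b)
    (hμ : 1 ≤ μ * (b - a) ^ 2) :
    ∑ k ∈ range 5, μ ^ k * ∫ x in a..b, iteratedDeriv (4 - k) y x ^ 2 ≤
      512 * 864 ^ 9 * ((∫ x in a..b, iteratedDeriv 4 y x ^ 2) + μ ^ 4 * ∫ x in a..b, y x ^ 2) := by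
  have hμ0 : 0 ≤ μ := (pos_of_mul_pos_left (one_pos.trans_le hμ) (sq_nonneg _)).le
  set q : ℕ → ℝ := fun j => ∫ x in a..b, iteratedDeriv j y x ^ 2
  -- the interpolation inequality at scale `t * μ`, multiplied by `μ ^ (2 - i)`
  have hstep : ∀ i ≤ 2, ∀ t : ℝ, 1 ≤ t → t * (μ ^ (3 - i) * q (i + 1)) ≤
      864 * (t ^ 2 * (μ ^ (4 - i) * q i) + μ ^ (2 - i) * q (i + 2)) := fun i hi t ht => by
    have h := mul_integral_sq_iteratedDeriv_succ_le (n := 4) hy (j := i) (by omega) hab (μ := t * μ)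
      (by nlinarith)
    have e3 : μ ^ (3 - i) = μ ^ (2 - i) * μ := by rw [← pow_succ]; congr 1; omega
    have e4 : μ ^ (4 - i) = μ ^ (2 - i) * μ ^ 2 := by rw [← pow_add]; congr 1; omega
    rw [e3, e4]
    linarith [mul_le_mul_of_nonneg_left h (pow_nonneg hμ0 (2 - i))]
  have hchain := sum_range_five_le_of_interpolation (K := 864)
    (X := fun m => μ ^ m * q (4 - m)) (by norm_num)
    (fun m => mul_nonneg (pow_nonneg hμ0 m)
      (intervalIntegral.integral_nonneg hab.le fun _ _ => sq_nonneg _))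
    (fun m hm0 hm4 t ht => by
      interval_cases m
      · simpa using hstep 2 le_rfl t ht
      · simpa using hstep 1 (by norm_num) t ht
      · simpa using hstep 0 (by norm_num) t ht)
  simpa [q] using hchain

theorem integral_sq_iteratedDeriv_four_le {a b μ c : ℝ} (hab : a < b)
    (hμ : 1 ≤ μ * (b - a) ^ 2) (hc : 4 * (512 * 864 ^ 9) * c ^ 2 ≤ μ ^ 2) :
    ∫ x in a..b, iteratedDeriv 4 y x ^ 2 ≤
      4 * (∫ x in a..b, (iteratedDeriv 4 y x + c * iteratedDeriv 2 y x) ^ 2) +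
        μ ^ 4 * ∫ x in a..b, y x ^ 2 := by
  have hμ0 : 0 < μ := pos_of_mul_pos_left (one_pos.trans_le hμ) (sq_nonneg _)
  have hI : ∀ f : ℝ → ℝ, 0 ≤ ∫ x in a..b, f x ^ 2 := fun f =>
    intervalIntegral.integral_nonneg hab.le fun _ _ => sq_nonneg _
  have htri := integral_sq_le_two_mul_integral_sq_add (hy.continuous_iteratedDeriv 4 le_rfl)
    (continuous_const.mul (hy.continuous_iteratedDeriv 2 (by norm_num))) hab.le
    (g := fun x => c * iteratedDeriv 2 y x)
  simp only [mul_pow, intervalIntegral.integral_const_mul] at htri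
  set R := (∫ x in a..b, iteratedDeriv 4 y x ^ 2) + μ ^ 4 * ∫ x in a..b, y x ^ 2
  have hR : 0 ≤ R := add_nonneg (hI _) (mul_nonneg (pow_nonneg hμ0.le 4) (hI y))
  have hq2 : μ ^ 2 * ∫ x in a..b, iteratedDeriv 2 y x ^ 2 ≤ 512 * 864 ^ 9 * R :=
    (single_le_sum (f := fun k => μ ^ k * ∫ x in a..b, iteratedDeriv (4 - k) y x ^ 2)
      (fun k _ => mul_nonneg (pow_nonneg hμ0.le k) (hI _)) (by simp : 2 ∈ range 5)).trans
      (sum_pow_mul_integral_sq_iteratedDeriv_le hy hab hμ)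
  have habsorb : μ ^ 2 * (4 * c ^ 2 * ∫ x in a..b, iteratedDeriv 2 y x ^ 2) ≤ μ ^ 2 * R := by
    nlinarith [mul_le_mul_of_nonneg_left hq2 (sq_nonneg c), mul_le_mul_of_nonneg_right hc hR]
  linarith [le_of_mul_le_mul_left habsorb (by positivity)]

theorem sum_pow_mul_integral_sq_iteratedDeriv_le_elliptic {a b lam s c : ℝ} (hab : a < b)
    (hs : 0 < s) (hs1 : s ≤ 1) (hsl : s ≤ lam * (b - a) ^ 2)
    (hc : 4 * (512 * 864 ^ 9) * s ^ 2 * c ^ 2 ≤ lam ^ 2) :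
    ∑ k ∈ range 5, lam ^ k * ∫ x in a..b, iteratedDeriv (4 - k) y x ^ 2 ≤
      4 * (512 * 864 ^ 9) / s ^ 4 *
        ((∫ x in a..b, (iteratedDeriv 4 y x + c * iteratedDeriv 2 y x) ^ 2) +
          lam ^ 4 * ∫ x in a..b, y x ^ 2) := by
  have hlam : 0 < lam := pos_of_mul_pos_left (hs.trans_le hsl) (sq_nonneg _)
  have hI : ∀ f : ℝ → ℝ, 0 ≤ ∫ x in a..b, f x ^ 2 := fun f =>
    intervalIntegral.integral_nonneg hab.le fun _ _ => sq_nonneg _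
  set μ := lam / s
  have hμ : 1 ≤ μ * (b - a) ^ 2 := by rwa [div_mul_eq_mul_div, one_le_div hs]
  have hμc : 4 * (512 * 864 ^ 9) * c ^ 2 ≤ μ ^ 2 := by
    rw [div_pow, le_div_iff₀ (by positivity)]; linarith
  have hmono : ∑ k ∈ range 5, lam ^ k * ∫ x in a..b, iteratedDeriv (4 - k) y x ^ 2 ≤
      ∑ k ∈ range 5, μ ^ k * ∫ x in a..b, iteratedDeriv (4 - k) y x ^ 2 :=
    sum_le_sum fun k _ => mul_le_mul_of_nonneg_right
      (pow_le_pow_left₀ hlam.le (le_div_self hlam.le hs hs1) k) (hI _)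
  have h4 := integral_sq_iteratedDeriv_four_le hy hab hμ hμc
  set F := ∫ x in a..b, (iteratedDeriv 4 y x + c * iteratedDeriv 2 y x) ^ 2
  set Q := ∫ x in a..b, y x ^ 2
  have hF : 0 ≤ F := hI _
  have hμQ : 0 ≤ μ ^ 4 * Q := mul_nonneg (pow_nonneg (div_nonneg hlam.le hs.le) 4) (hI y)
  calc _ ≤ 512 * 864 ^ 9 * ((∫ x in a..b, iteratedDeriv 4 y x ^ 2) + μ ^ 4 * Q) :=
        hmono.trans (sum_pow_mul_integral_sq_iteratedDeriv_le hy hab hμ)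
    _ ≤ 512 * 864 ^ 9 * (4 * F + 2 * (μ ^ 4 * Q)) :=
        mul_le_mul_of_nonneg_left (by linarith) (by norm_num)
    _ = 4 * (512 * 864 ^ 9) / s ^ 4 * (s ^ 4 * F + lam ^ 4 * Q / 2) := by
        simp only [μ]; field_simp; ring
    _ ≤ _ := by
        refine mul_le_mul_of_nonneg_left ?_ (by positivity)
        linarith [mul_le_of_le_one_left hF (pow_le_one₀ hs.le hs1 (n := 4)),
          mul_nonneg (pow_nonneg hlam.le 4) (hI y)]

end FourthOrder

theorem fourth_order_elliptic_estimate_general (a lam₀ : ℝ) (hlam₀ : 0 < lam₀) :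
    ∃ C' : ℝ, 0 < C' ∧ ∀ lam : ℝ, lam₀ ≤ lam → ∀ y : ℝ → ℝ, ContDiff ℝ 4 y →
      y (-1) = 0 → y 0 = 0 → deriv y 0 = 0 →
      ∑ k ∈ Finset.range 5, lam^k * (∫ x in (-1:ℝ)..0, (iteratedDeriv (4-k) y x)^2) ≤
        C' * ((∫ x in (-1:ℝ)..0, (iteratedDeriv 4 y x + (a - lam) * iteratedDeriv 2 y x)^2) +
              (∫ x in (-1:ℝ)..0, (iteratedDeriv 3 y x + (a - lam) * deriv y x)^2) +
              lam^4 * (∫ x in (-1:ℝ)..0, (y x)^2)) := by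
  set C₀ : ℝ := 512 * 864 ^ 9
  set B : ℝ := 2 * (a / lam₀) ^ 2 + 2
  have hC₀B : 1 ≤ 4 * C₀ * B := by simp only [C₀, B]; nlinarith [sq_nonneg (a / lam₀)]
  set s : ℝ := min 1 lam₀ / (4 * C₀ * B)
  have hs : 0 < s := div_pos (lt_min one_pos hlam₀) (by linarith)
  have hsB : 4 * C₀ * B * s ≤ 1 := by rw [mul_div_cancel₀ _ (by linarith)]; exact min_le_left _ _
  have hsm : s ≤ min 1 lam₀ := div_le_self (lt_min one_pos hlam₀).le hC₀B
  have hs1 : s ≤ 1 := hsm.trans (min_le_left _ _)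
  refine ⟨4 * C₀ / s ^ 4, by positivity, fun lam hlam y hy _ _ _ => ?_⟩
  have hB : (a - lam) ^ 2 ≤ B * lam ^ 2 := by
    have : a ^ 2 ≤ (a / lam₀) ^ 2 * lam ^ 2 :=
      calc a ^ 2 = (a / lam₀) ^ 2 * lam₀ ^ 2 := by field_simp
        _ ≤ _ := by gcongr
    nlinarith [sq_nonneg (a + lam)]
  have hc : 4 * C₀ * s ^ 2 * (a - lam) ^ 2 ≤ lam ^ 2 := by
    nlinarith [mul_le_mul_of_nonneg_left hB (by positivity : 0 ≤ 4 * C₀ * s ^ 2),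
      mul_le_mul_of_nonneg_right (hsB.trans' (by nlinarith) : 4 * C₀ * B * s ^ 2 ≤ 1)
        (sq_nonneg lam)]
  have hG : 0 ≤ ∫ x in (-1:ℝ)..0, (iteratedDeriv 3 y x + (a - lam) * deriv y x) ^ 2 :=
    intervalIntegral.integral_nonneg (by norm_num) fun _ _ => sq_nonneg _
  calc _ ≤ 4 * C₀ / s ^ 4 *
        ((∫ x in (-1:ℝ)..0, (iteratedDeriv 4 y x + (a - lam) * iteratedDeriv 2 y x) ^ 2) +
          lam ^ 4 * ∫ x in (-1:ℝ)..0, y x ^ 2) :=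
        sum_pow_mul_integral_sq_iteratedDeriv_le_elliptic hy (by norm_num) hs hs1
          (by simpa using (hsm.trans (min_le_right _ _)).trans hlam) hc
    _ ≤ _ := mul_le_mul_of_nonneg_left (by linarith) (by positivity)

theorem fourth_order_elliptic_estimate (a lam₀ : ℝ) (ha : 0 ≤ a) (hlam₀ : 0 < lam₀) :
    ∃ C' : ℝ, 0 < C' ∧ ∀ lam : ℝ, lam₀ ≤ lam → ∀ y : ℝ → ℝ, ContDiff ℝ 4 y →
      y (-1) = 0 → y 0 = 0 → deriv y 0 = 0 →
      ∑ k ∈ Finset.range 5, lam^k * (∫ x in (-1:ℝ)..0, (iteratedDeriv (4-k) y x)^2) ≤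
        C' * ((∫ x in (-1:ℝ)..0, (iteratedDeriv 4 y x + (a - lam) * iteratedDeriv 2 y x)^2) +
              (∫ x in (-1:ℝ)..0, (iteratedDeriv 3 y x + (a - lam) * deriv y x)^2) +
              lam^4 * (∫ x in (-1:ℝ)..0, (y x)^2)) :=
  fourth_order_elliptic_estimate_general a lam₀ hlam₀
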